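/- arXiv:1310.1745 — 5 statements merged into one kernel-verified Lean document; each statement's English description precedes it below -/
import Mathlib

section
/- Fix a prime p, an even integer k ≥ 4, and rational numbers a, b, c (playing the roles of a(T), a(pT), a(p²T)). Suppose a₀, a₁, a₂ are rational numbers satisfying the linear system: (i) a = a₀ + a₁ + a₂; (ii) b = a₀ + (p^{k−1} + 1 − p^{−1}) a₁ + (p^{2k−3} + p^{k−1} − p^{k−3} + 1 − p^{−1}) a₂; (iii) −p^{2−k} c + (p^{k−1} + p + 1 + p^{2−k}) b − p^{k−1} a = (p+1) a₀ + (p^{2k−2} + p^{k−1} − p^{k−2} + p + 1 − p^{−1}) a₁ + (p^{2k−2} + p^{2k−3} + p^{k−1} − p^{k−3} + p + 1 − p^{−1} − p^{−2}) a₂. Then a₂ = (p³ a − (p³ + p^{4−k}) b + p^{4−k} c)/((p^{k} − 1)(p^{2k−2} − 1)). -/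
/-! With `x = p` and `k = m + 4`, the combination
`(x^(m+5) - x^3)·(i) - (x^(m+5) + x^2)·(ii) + x^2·(iii)` eliminates `a₀` and `a₁` and leaves
`a₂ · (x^k - 1)(x^(2k-2) - 1)`; this factor is nonzero because `p > 1`. -/

theorem mul_eq_of_eisenstein_system {K : Type*} [Field K] {x : K} (hx : x ≠ 0) (m : ℕ)
    {a b c a₀ a₁ a₂ : K}
    (h1 : a = a₀ + a₁ + a₂)
    (h2 : b = a₀ + (x ^ (m + 3) + 1 - x⁻¹) * a₁ +
      (x ^ (2 * m + 5) + x ^ (m + 3) - x ^ (m + 1) + 1 - x⁻¹) * a₂)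
    (h3 : -(x ^ (m + 2))⁻¹ * c + (x ^ (m + 3) + x + 1 + (x ^ (m + 2))⁻¹) * b - x ^ (m + 3) * a =
      (x + 1) * a₀ + (x ^ (2 * m + 6) + x ^ (m + 3) - x ^ (m + 2) + x + 1 - x⁻¹) * a₁ +
        (x ^ (2 * m + 6) + x ^ (2 * m + 5) + x ^ (m + 3) - x ^ (m + 1) + x + 1 - x⁻¹ -
          (x ^ 2)⁻¹) * a₂) :
    a₂ * ((x ^ (m + 4) - 1) * (x ^ (2 * m + 6) - 1)) =
      x ^ 3 * a - (x ^ 3 + (x ^ m)⁻¹) * b + (x ^ m)⁻¹ * c := by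
  linear_combination (norm := skip)
    (x ^ (m + 5) - x ^ 3) * h1 - (x ^ (m + 5) + x ^ 2) * h2 + x ^ 2 * h3
  field_simp
  ring

theorem stmt_10_general (p k : ℕ) (hp : p.Prime) (hk : 4 ≤ k)
    (a b c a₀ a₁ a₂ : ℚ)
    (h1 : a = a₀ + a₁ + a₂)
    (h2 : b = a₀ + ((p : ℚ) ^ (k - 1) + 1 - (p : ℚ)⁻¹) * a₁ +
      ((p : ℚ) ^ (2 * k - 3) + (p : ℚ) ^ (k - 1) - (p : ℚ) ^ (k - 3) + 1 - (p : ℚ)⁻¹) * a₂)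
    (h3 : -(p : ℚ) ^ ((2 : ℤ) - (k : ℤ)) * c +
        ((p : ℚ) ^ (k - 1) + (p : ℚ) + 1 + (p : ℚ) ^ ((2 : ℤ) - (k : ℤ))) * b -
        (p : ℚ) ^ (k - 1) * a =
      ((p : ℚ) + 1) * a₀ +
        ((p : ℚ) ^ (2 * k - 2) + (p : ℚ) ^ (k - 1) - (p : ℚ) ^ (k - 2) + (p : ℚ) + 1 -
          (p : ℚ)⁻¹) * a₁ +
        ((p : ℚ) ^ (2 * k - 2) + (p : ℚ) ^ (2 * k - 3) + (p : ℚ) ^ (k - 1) -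
          (p : ℚ) ^ (k - 3) + (p : ℚ) + 1 - (p : ℚ)⁻¹ - ((p : ℚ) ^ 2)⁻¹) * a₂) :
    a₂ = ((p : ℚ) ^ 3 * a - ((p : ℚ) ^ 3 + (p : ℚ) ^ ((4 : ℤ) - (k : ℤ))) * b +
        (p : ℚ) ^ ((4 : ℤ) - (k : ℤ)) * c) /
      (((p : ℚ) ^ k - 1) * ((p : ℚ) ^ (2 * k - 2) - 1)) := by
  obtain ⟨m, rfl⟩ := Nat.exists_eq_add_of_le' hk
  have hp1 : (1 : ℚ) < p := by exact_mod_cast hp.one_lt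
  have hpow_ne_one {n : ℕ} (hn : n ≠ 0) : (p : ℚ) ^ n - 1 ≠ 0 :=
    sub_ne_zero.mpr (one_lt_pow₀ hp1 hn).ne'
  rw [show (2 : ℤ) - (m + 4 : ℕ) = -(m + 2 : ℕ) by push_cast; ring] at h3
  rw [show (4 : ℤ) - (m + 4 : ℕ) = -(m : ℕ) by push_cast; ring]
  simp only [zpow_neg, zpow_natCast, show m + 4 - 1 = m + 3 by omega,
    show m + 4 - 2 = m + 2 by omega, show m + 4 - 3 = m + 1 by omega,
    show 2 * (m + 4) - 2 = 2 * m + 6 by omega, show 2 * (m + 4) - 3 = 2 * m + 5 by omega]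
    at h2 h3 ⊢
  exact eq_div_of_mul_eq (mul_ne_zero (hpow_ne_one (by omega)) (hpow_ne_one (by omega)))
    (mul_eq_of_eisenstein_system (zero_lt_one.trans hp1).ne' m h1 h2 h3)

/-- Solving the linear system from Lemma 3.1 for a₂. -/
theorem stmt_10 (p k : ℕ) (hp : p.Prime) (hk : 4 ≤ k) (hke : Even k)
    (a b c a₀ a₁ a₂ : ℚ)
    (h1 : a = a₀ + a₁ + a₂)
    (h2 : b = a₀ + ((p : ℚ) ^ (k - 1) + 1 - (p : ℚ)⁻¹) * a₁ +
      ((p : ℚ) ^ (2 * k - 3) + (p : ℚ) ^ (k - 1) - (p : ℚ) ^ (k - 3) + 1 - (p : ℚ)⁻¹) * a₂)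
    (h3 : -(p : ℚ) ^ ((2 : ℤ) - (k : ℤ)) * c +
        ((p : ℚ) ^ (k - 1) + (p : ℚ) + 1 + (p : ℚ) ^ ((2 : ℤ) - (k : ℤ))) * b -
        (p : ℚ) ^ (k - 1) * a =
      ((p : ℚ) + 1) * a₀ +
        ((p : ℚ) ^ (2 * k - 2) + (p : ℚ) ^ (k - 1) - (p : ℚ) ^ (k - 2) + (p : ℚ) + 1 -
          (p : ℚ)⁻¹) * a₁ +
        ((p : ℚ) ^ (2 * k - 2) + (p : ℚ) ^ (2 * k - 3) + (p : ℚ) ^ (k - 1) -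
          (p : ℚ) ^ (k - 3) + (p : ℚ) + 1 - (p : ℚ)⁻¹ - ((p : ℚ) ^ 2)⁻¹) * a₂) :
    a₂ = ((p : ℚ) ^ 3 * a - ((p : ℚ) ^ 3 + (p : ℚ) ^ ((4 : ℤ) - (k : ℤ))) * b +
        (p : ℚ) ^ ((4 : ℤ) - (k : ℤ)) * c) /
      (((p : ℚ) ^ k - 1) * ((p : ℚ) ^ (2 * k - 2) - 1)) :=
  stmt_10_general p k hp hk a b c a₀ a₁ a₂ h1 h2 h3
end

section
/- With the same hypotheses and linear system (i)–(iii) as before (a = a₀+a₁+a₂; b = a₀ + (p^{k−1}+1−p^{−1})a₁ + (p^{2k−3}+p^{k−1}−p^{k−3}+1−p^{−1})a₂; and the third relation with right-hand side involving U₁(p²) coefficients), one has a₀ = ((p^{3k−2} + p^{2k−1} − p^{2k−2} + p^{k+1} − p^{k} − p + 1) a − (p^{2k−1} + p^{k+1} + p² − p) b + p² c)/((p^{k} − 1)(p^{2k−2} − 1)). -/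
/-- Solving the linear system from Lemma 3.1 for a₀. -/
theorem stmt_11 (p k : ℕ) (hp : p.Prime) (hk : 4 ≤ k) (hke : Even k)
    (a b c a₀ a₁ a₂ : ℚ)
    (h1 : a = a₀ + a₁ + a₂)
    (h2 : b = a₀ + ((p : ℚ) ^ (k - 1) + 1 - (p : ℚ)⁻¹) * a₁ +
      ((p : ℚ) ^ (2 * k - 3) + (p : ℚ) ^ (k - 1) - (p : ℚ) ^ (k - 3) + 1 - (p : ℚ)⁻¹) * a₂)
    (h3 : -(p : ℚ) ^ ((2 : ℤ) - (k : ℤ)) * c +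
        ((p : ℚ) ^ (k - 1) + (p : ℚ) + 1 + (p : ℚ) ^ ((2 : ℤ) - (k : ℤ))) * b -
        (p : ℚ) ^ (k - 1) * a =
      ((p : ℚ) + 1) * a₀ +
        ((p : ℚ) ^ (2 * k - 2) + (p : ℚ) ^ (k - 1) - (p : ℚ) ^ (k - 2) + (p : ℚ) + 1 -
          (p : ℚ)⁻¹) * a₁ +
        ((p : ℚ) ^ (2 * k - 2) + (p : ℚ) ^ (2 * k - 3) + (p : ℚ) ^ (k - 1) -
          (p : ℚ) ^ (k - 3) + (p : ℚ) + 1 - (p : ℚ)⁻¹ - ((p : ℚ) ^ 2)⁻¹) * a₂) :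
    a₀ = (((p : ℚ) ^ (3 * k - 2) + (p : ℚ) ^ (2 * k - 1) - (p : ℚ) ^ (2 * k - 2) +
        (p : ℚ) ^ (k + 1) - (p : ℚ) ^ k - (p : ℚ) + 1) * a -
        ((p : ℚ) ^ (2 * k - 1) + (p : ℚ) ^ (k + 1) + (p : ℚ) ^ 2 - (p : ℚ)) * b +
        (p : ℚ) ^ 2 * c) /
      (((p : ℚ) ^ k - 1) * ((p : ℚ) ^ (2 * k - 2) - 1)) := by
  obtain ⟨m, rfl⟩ : ∃ m, k = m + 4 := ⟨k - 4, by omega⟩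
  set x : ℚ := (p : ℚ) with hxdef
  have hx1 : (1 : ℚ) < x := by rw [hxdef]; exact_mod_cast hp.one_lt
  have hx : x ≠ 0 := by positivity
  have e1 : m + 4 - 1 = m + 3 := by omega
  have e2 : 2 * (m + 4) - 3 = 2 * m + 5 := by omega
  have e3 : m + 4 - 3 = m + 1 := by omega
  have e4 : 2 * (m + 4) - 2 = 2 * m + 6 := by omega
  have e5 : m + 4 - 2 = m + 2 := by omega
  have e6 : 3 * (m + 4) - 2 = 3 * m + 10 := by omega
  have e7 : 2 * (m + 4) - 1 = 2 * m + 7 := by omega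
  have ez : ((2 : ℤ) - ((m + 4 : ℕ) : ℤ)) = -((m + 2 : ℕ) : ℤ) := by push_cast; ring
  simp only [e1, e2, e3, e4, e5, e6, e7, ez, zpow_neg, zpow_natCast] at h2 h3 ⊢
  -- cleared versions of h2 and h3
  have h2' : x * b = x * a₀ + (x ^ (m + 4) + x - 1) * a₁ +
      (x ^ (2 * m + 6) + x ^ (m + 4) - x ^ (m + 2) + x - 1) * a₂ := by
    rw [h2]; field_simp; ring
  have h3' : -c + (x ^ (2 * m + 5) + x ^ (m + 3) + x ^ (m + 2) + 1) * b
        - x ^ (2 * m + 5) * a =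
      (x + 1) * x ^ (m + 2) * a₀ +
        (x ^ (3 * m + 8) + x ^ (2 * m + 5) - x ^ (2 * m + 4) + x ^ (m + 3) + x ^ (m + 2)
          - x ^ (m + 1)) * a₁ +
        (x ^ (3 * m + 8) + x ^ (3 * m + 7) + x ^ (2 * m + 5) - x ^ (2 * m + 3) + x ^ (m + 3)
          + x ^ (m + 2) - x ^ (m + 1) - x ^ m) * a₂ := by
    calc -c + (x ^ (2 * m + 5) + x ^ (m + 3) + x ^ (m + 2) + 1) * b
          - x ^ (2 * m + 5) * a
        = (-(x ^ (m + 2))⁻¹ * c + (x ^ (m + 3) + x + 1 + (x ^ (m + 2))⁻¹) * b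
            - x ^ (m + 3) * a) * x ^ (m + 2) := by
          field_simp; ring
      _ = ((x + 1) * a₀ +
            (x ^ (2 * m + 6) + x ^ (m + 3) - x ^ (m + 2) + x + 1 - x⁻¹) * a₁ +
            (x ^ (2 * m + 6) + x ^ (2 * m + 5) + x ^ (m + 3) - x ^ (m + 1) + x + 1 - x⁻¹
              - (x ^ 2)⁻¹) * a₂) * x ^ (m + 2) := by rw [h3]
      _ = _ := by field_simp; ring
  have hD : (x ^ (m + 4) - 1) * (x ^ (2 * m + 6) - 1) ≠ 0 := by
    have h4 : (1 : ℚ) < x ^ (m + 4) := one_lt_pow₀ hx1 (by omega)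
    have h6 : (1 : ℚ) < x ^ (2 * m + 6) := one_lt_pow₀ hx1 (by omega)
    exact mul_ne_zero (by linarith) (by linarith)
  rw [eq_div_iff hD]
  linear_combination (-x ^ (3 * m + 10) + x ^ (2 * m + 6) - x ^ (m + 5) + x ^ (m + 4)
      + x - 1) * h1 + (-1 - x ^ (m + 3)) * h2' + x ^ 2 * h3'
end

section
/- Fix a prime p and integer k ≥ 4. The 3×3 matrix of the linear system a = a₀+a₁+a₂, b = a₀ + (p^{k−1}+1−p^{−1})a₁ + (p^{2k−3}+p^{k−1}−p^{k−3}+1−p^{−1})a₂, and the U₁(p²)-relation (with coefficients (p+1), (p^{2k−2}+p^{k−1}−p^{k−2}+p+1−p^{−1}), (p^{2k−2}+p^{2k−3}+p^{k−1}−p^{k−3}+p+1−p^{−1}−p^{−2}) respectively), is invertible over ℚ; in particular (a₀,a₁,a₂) is uniquely determined by the left-hand sides. -/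
/-!
Writing `k = m + 3`, the determinant factors as
`-(q^(k-1) - 1) (q^(k-1) + 1) (q^k - 1)² / q³` with `q = p`, which is nonzero since `p > 1`.
-/

section RelationMatrix

variable {K : Type*} [Field K]

/-- The matrix of the three relations, with `q = p` and `m = k - 3`. -/
def relationMatrix (q : K) (m : ℕ) : Matrix (Fin 3) (Fin 3) K :=
  !![1, 1, 1;
    1, q ^ (m + 2) + 1 - q⁻¹, q ^ (2 * m + 3) + q ^ (m + 2) - q ^ m + 1 - q⁻¹;
    q + 1, q ^ (2 * m + 4) + q ^ (m + 2) - q ^ (m + 1) + q + 1 - q⁻¹,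
      q ^ (2 * m + 4) + q ^ (2 * m + 3) + q ^ (m + 2) - q ^ m + q + 1 - q⁻¹ - (q ^ 2)⁻¹]

theorem det_relationMatrix {q : K} (hq : q ≠ 0) (m : ℕ) :
    (relationMatrix q m).det =
      -((q ^ (m + 2) - 1) * (q ^ (m + 2) + 1) * (q ^ (m + 3) - 1) ^ 2) / q ^ 3 := by
  rw [relationMatrix, Matrix.det_fin_three]
  simp only [Matrix.of_apply, Matrix.cons_val', Matrix.cons_val_zero, Matrix.cons_val_one,
    Matrix.cons_val_two, Matrix.head_cons, Matrix.tail_cons, Matrix.empty_val',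
    Matrix.cons_val_fin_one, Matrix.head_fin_const]
  field_simp
  ring

theorem isUnit_relationMatrix [LinearOrder K] [IsStrictOrderedRing K] {q : K} (hq : 1 < q)
    (m : ℕ) : IsUnit (relationMatrix q m) := by
  rw [Matrix.isUnit_iff_isUnit_det, isUnit_iff_ne_zero, det_relationMatrix (by positivity)]
  have h₂ : 0 < q ^ (m + 2) - 1 := sub_pos.2 (one_lt_pow₀ hq (by omega))
  have h₃ : 0 < q ^ (m + 3) - 1 := sub_pos.2 (one_lt_pow₀ hq (by omega))
  have : 0 < q := by linarith
  exact (div_neg_of_neg_of_pos (neg_neg_of_pos (by positivity)) (by positivity)).ne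

end RelationMatrix

/-- The 3×3 matrix of the linear system relating (a(T), a(pT), a(T;E|U₁(p²))) to
(a₀, a₁, a₂) is invertible over ℚ. -/
theorem stmt_12 (p k : ℕ) (hp : p.Prime) (hk : 4 ≤ k) :
    IsUnit (!![(1 : ℚ), 1, 1;
      1, (p : ℚ) ^ (k - 1) + 1 - (p : ℚ)⁻¹,
        (p : ℚ) ^ (2 * k - 3) + (p : ℚ) ^ (k - 1) - (p : ℚ) ^ (k - 3) + 1 - (p : ℚ)⁻¹;
      (p : ℚ) + 1,
        (p : ℚ) ^ (2 * k - 2) + (p : ℚ) ^ (k - 1) - (p : ℚ) ^ (k - 2) + (p : ℚ) + 1 -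
          (p : ℚ)⁻¹,
        (p : ℚ) ^ (2 * k - 2) + (p : ℚ) ^ (2 * k - 3) + (p : ℚ) ^ (k - 1) -
          (p : ℚ) ^ (k - 3) + (p : ℚ) + 1 - (p : ℚ)⁻¹ - ((p : ℚ) ^ 2)⁻¹] :
      Matrix (Fin 3) (Fin 3) ℚ) := by
  obtain ⟨m, rfl⟩ : ∃ m, k = m + 3 := ⟨k - 3, by omega⟩
  have hp₁ : (1 : ℚ) < p := by exact_mod_cast hp.one_lt
  convert isUnit_relationMatrix hp₁ m using 1
  rw [relationMatrix, show m + 3 - 1 = m + 2 by omega, show 2 * (m + 3) - 3 = 2 * m + 3 by omega,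
    show m + 3 - 3 = m by omega, show 2 * (m + 3) - 2 = 2 * m + 4 by omega,
    show m + 3 - 2 = m + 1 by omega]
end

section
/- Let N be a squarefree positive integer, p a prime not dividing N, k ≥ 2 an integer, and f a positive integer. Write 𝟙_N for the indicator of being coprime to N, and let χ : ℕ → {−1,0,1} be a completely multiplicative function. Then ∑_{g ∣ f} 𝟙_N(g) μ(g) χ(g) g^{k−2} ∑_{h ∣ (f/g)} 𝟙_N(h) h^{2k−3} = ( ∑_{g ∣ f} 𝟙_{Np}(g) μ(g) χ(g) g^{k−2} ∑_{h ∣ (f/g)} 𝟙_{Np}(h) h^{2k−3} ) · ( ∑_{j=0}^{v} p^{j(2k−3)} − χ(p) p^{k−2} ∑_{j=0}^{v−1} p^{j(2k−3)} ), where v = ord_p(f). -/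
/-!
Both sides are values at `f` of multiplicative arithmetic functions
`H_M = 𝟙_M μ χ n^(k-2) * (𝟙_M n^(2k-3) * ζ)`, for `M = N` and `M = Np`. Write `f = p^v m` with
`p ∤ m`. Every divisor of `m` is prime to `p`, so `H_N m = H_{Np} m`. At `p^v` the factor `𝟙_{Np}`
kills every proper power of `p`, so `H_{Np} (p^v) = 1`, while `H_N (p^v)` is the stated Euler factor,
because `μ` vanishes on `p^i` for `i ≥ 2`.
-/

open Finset
open scoped ArithmeticFunction.Moebius ArithmeticFunction.zeta ArithmeticFunction.sigma

namespace ArithmeticFunction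

variable {R : Type*}

def coprimeRestrict [Zero R] (N : ℕ) (F : ArithmeticFunction R) : ArithmeticFunction R :=
  ⟨fun n => if n.Coprime N then F n else 0, by simp⟩

@[simp]
theorem coprimeRestrict_apply [Zero R] (N : ℕ) (F : ArithmeticFunction R) (n : ℕ) :
    coprimeRestrict N F n = if n.Coprime N then F n else 0 :=
  rfl

theorem coprimeRestrict_apply_of_coprime [Zero R] {N n : ℕ} (F : ArithmeticFunction R)
    (hn : n.Coprime N) : coprimeRestrict N F n = F n :=
  if_pos hn

theorem coprimeRestrict_mul_apply_of_coprime [Zero R] {N p n : ℕ} (F : ArithmeticFunction R)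
    (hn : n.Coprime p) : coprimeRestrict (N * p) F n = coprimeRestrict N F n := by
  simp only [coprimeRestrict_apply, Nat.coprime_mul_iff_right]
  exact if_congr (and_iff_left hn) rfl rfl

theorem coprimeRestrict_apply_pow_of_dvd [Zero R] {N p i : ℕ} (F : ArithmeticFunction R)
    (hp : p ≠ 1) (hpN : p ∣ N) (hi : i ≠ 0) : coprimeRestrict N F (p ^ i) = 0 := by
  exact if_neg fun h => hp <|
    ((Nat.coprime_pow_left_iff (Nat.pos_of_ne_zero hi) _ _).mp h).eq_one_of_dvd hpN

theorem IsMultiplicative.coprimeRestrict [MonoidWithZero R] {F : ArithmeticFunction R}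
    (hF : F.IsMultiplicative) (N : ℕ) : (coprimeRestrict N F).IsMultiplicative := by
  refine ⟨by simp [hF.map_one], fun {m n} hmn => ?_⟩
  simp only [coprimeRestrict_apply, Nat.coprime_mul_iff_left]
  split_ifs <;> simp_all [hF.map_mul_of_coprime hmn]

theorem mul_apply_congr [Semiring R] {F F' G G' : ArithmeticFunction R} {n : ℕ}
    (hF : ∀ d ∈ n.divisors, F d = F' d) (hG : ∀ d ∈ n.divisors, G d = G' d) :
    (F * G) n = (F' * G') n := by
  simp only [mul_apply]
  refine sum_congr rfl fun x hx => ?_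
  have hxn : x.1 * x.2 = n := (Nat.mem_divisorsAntidiagonal.mp hx).1
  have hn : n ≠ 0 := (Nat.mem_divisorsAntidiagonal.mp hx).2
  rw [hF _ (Nat.mem_divisors.mpr ⟨⟨x.2, hxn.symm⟩, hn⟩),
    hG _ (Nat.mem_divisors.mpr ⟨⟨x.1, hxn.symm.trans (mul_comm _ _)⟩, hn⟩)]

theorem mul_apply_prime_pow [Semiring R] (F G : ArithmeticFunction R) {p : ℕ} (hp : p.Prime)
    (v : ℕ) : (F * G) (p ^ v) = ∑ i ∈ range (v + 1), F (p ^ i) * G (p ^ (v - i)) := by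
  rw [mul_apply, Nat.sum_divisorsAntidiagonal (fun x y => F x * G y),
    Nat.sum_divisors_prime_pow hp]
  refine sum_congr rfl fun i hi => ?_
  rw [Nat.pow_div (by simpa [Nat.lt_succ_iff] using hi) hp.pos]

theorem mul_apply_prime_pow_of_apply_pow_eq_zero [Semiring R] {F : ArithmeticFunction R}
    (G : ArithmeticFunction R) {p : ℕ} (hp : p.Prime) (hF : ∀ i ≠ 0, F (p ^ i) = 0) (v : ℕ) :
    (F * G) (p ^ v) = F 1 * G (p ^ v) := by
  rw [mul_apply_prime_pow F G hp, sum_range_succ', sum_eq_zero fun i _ => by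
    rw [hF _ i.succ_ne_zero, zero_mul]]
  simp

def twistedMoebius (χ : ℕ → ℤ) (a : ℕ) : ArithmeticFunction ℤ :=
  ⟨fun n => μ n * χ n * (n : ℤ) ^ a, by simp⟩

@[simp]
theorem twistedMoebius_apply (χ : ℕ → ℤ) (a n : ℕ) :
    twistedMoebius χ a n = μ n * χ n * (n : ℤ) ^ a :=
  rfl

theorem isMultiplicative_twistedMoebius {χ : ℕ → ℤ} (hχ1 : χ 1 = 1)
    (hχ : ∀ m n, m.Coprime n → χ (m * n) = χ m * χ n) (a : ℕ) :
    (twistedMoebius χ a).IsMultiplicative := by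
  refine ⟨by simp [hχ1], fun {m n} hmn => ?_⟩
  simp only [twistedMoebius_apply, isMultiplicative_moebius.map_mul_of_coprime hmn, hχ m n hmn]
  push_cast
  ring

def twistedDivisorSum (N a b : ℕ) (χ : ℕ → ℤ) : ArithmeticFunction ℤ :=
  coprimeRestrict N (twistedMoebius χ a) * (coprimeRestrict N (pow b : ArithmeticFunction ℤ) * ζ)

theorem isMultiplicative_twistedDivisorSum {χ : ℕ → ℤ} (hχ1 : χ 1 = 1)
    (hχ : ∀ m n, m.Coprime n → χ (m * n) = χ m * χ n) (N a b : ℕ) :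
    (twistedDivisorSum N a b χ).IsMultiplicative :=
  ((isMultiplicative_twistedMoebius hχ1 hχ a).coprimeRestrict N).mul
    ((isMultiplicative_pow.natCast.coprimeRestrict N).mul isMultiplicative_zeta.natCast)

theorem twistedDivisorSum_apply (N a b : ℕ) (χ : ℕ → ℤ) (n : ℕ) :
    twistedDivisorSum N a b χ n =
      ∑ g ∈ n.divisors, (if g.Coprime N then (1 : ℤ) else 0) * μ g * χ g * (g : ℤ) ^ a *
        ∑ h ∈ (n / g).divisors, (if h.Coprime N then (1 : ℤ) else 0) * (h : ℤ) ^ b := by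
  rw [twistedDivisorSum, mul_apply,
    Nat.sum_divisorsAntidiagonal fun g m => coprimeRestrict N (twistedMoebius χ a) g *
      (coprimeRestrict N (pow b : ArithmeticFunction ℤ) * ζ) m]
  refine sum_congr rfl fun g _ => ?_
  rw [coe_mul_zeta_apply]
  congr 1
  · simp only [coprimeRestrict_apply, twistedMoebius_apply]
    split_ifs <;> ring
  · refine sum_congr rfl fun h hh => ?_
    simp [Nat.ne_of_gt (Nat.pos_of_mem_divisors hh), pow_apply]

theorem coprimeRestrict_pow_mul_zeta_apply_of_coprime {N n : ℕ} (b : ℕ) (hn : n.Coprime N) :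
    (coprimeRestrict N (pow b : ArithmeticFunction ℤ) * ζ) n = σ b n := by
  rw [mul_comm, ← zeta_mul_pow_eq_sigma, ← natCoe_apply, natCoe_mul]
  exact mul_apply_congr (fun _ _ => rfl) fun d hd => coprimeRestrict_apply_of_coprime _
    (hn.coprime_dvd_left (Nat.dvd_of_mem_divisors hd))

theorem twistedDivisorSum_mul_apply_of_coprime {N p n : ℕ} (a b : ℕ) (χ : ℕ → ℤ)
    (hn : n.Coprime p) : twistedDivisorSum (N * p) a b χ n = twistedDivisorSum N a b χ n := by
  have hdiv {d : ℕ} (hd : d ∣ n) : d.Coprime p := hn.coprime_dvd_left hd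
  exact mul_apply_congr
    (fun d hd => coprimeRestrict_mul_apply_of_coprime _ (hdiv (Nat.dvd_of_mem_divisors hd)))
    fun d hd => mul_apply_congr (fun e he => coprimeRestrict_mul_apply_of_coprime _
      (hdiv ((Nat.dvd_of_mem_divisors he).trans (Nat.dvd_of_mem_divisors hd))))
      fun _ _ => rfl

theorem twistedDivisorSum_mul_self_apply_prime_pow {N p : ℕ} (hp : p.Prime) (a b : ℕ)
    {χ : ℕ → ℤ} (hχ1 : χ 1 = 1) (v : ℕ) : twistedDivisorSum (N * p) a b χ (p ^ v) = 1 := by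
  have hvanish {F : ArithmeticFunction ℤ} (i : ℕ) (hi : i ≠ 0) :
      coprimeRestrict (N * p) F (p ^ i) = 0 :=
    coprimeRestrict_apply_pow_of_dvd F hp.ne_one (dvd_mul_left p N) hi
  rw [twistedDivisorSum, mul_apply_prime_pow_of_apply_pow_eq_zero _ hp hvanish,
    mul_apply_prime_pow_of_apply_pow_eq_zero _ hp hvanish]
  simp [hχ1, hp.ne_zero]

theorem twistedDivisorSum_apply_prime_pow {N p : ℕ} (hp : p.Prime) (hpN : ¬ p ∣ N) (a b : ℕ)
    {χ : ℕ → ℤ} (hχ1 : χ 1 = 1) (v : ℕ) :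
    twistedDivisorSum N a b χ (p ^ v) =
      ∑ j ∈ range (v + 1), (p : ℤ) ^ (j * b) -
        χ p * (p : ℤ) ^ a * ∑ j ∈ range v, (p : ℤ) ^ (j * b) := by
  have hcop (i : ℕ) : (p ^ i).Coprime N := (hp.coprime_iff_not_dvd.mpr hpN).pow_left i
  have hsigma (j : ℕ) : (coprimeRestrict N (pow b : ArithmeticFunction ℤ) * ζ) (p ^ j) =
      ∑ i ∈ range (j + 1), (p : ℤ) ^ (i * b) := by
    rw [coprimeRestrict_pow_mul_zeta_apply_of_coprime b (hcop j), sigma_apply_prime_pow hp]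
    push_cast
    rfl
  rw [twistedDivisorSum, mul_apply_prime_pow _ _ hp]
  simp only [coprimeRestrict_apply_of_coprime _ (hcop _), twistedMoebius_apply, hsigma]
  cases v with
  | zero => simp [hχ1]
  | succ s =>
    rw [sum_range_succ', sum_range_succ', sum_eq_zero fun i _ => by
      rw [moebius_apply_prime_pow hp (by omega)]; simp]
    simp only [zero_add, pow_zero, pow_one, moebius_apply_prime hp, moebius_apply_one, hχ1,
      Nat.add_sub_cancel, Nat.sub_zero, Nat.cast_one, one_pow]
    ring

end ArithmeticFunction

open ArithmeticFunction in
theorem stmt_13_general (N p k f : ℕ) (hp : p.Prime)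
    (hpN : ¬ p ∣ N) (χ : ℕ → ℤ) (hχ1 : χ 1 = 1)
    (hχm : ∀ m n, χ (m * n) = χ m * χ n) :
    (∑ g ∈ f.divisors, (if Nat.Coprime g N then (1 : ℤ) else 0) * moebius g * χ g *
        (g : ℤ) ^ (k - 2) *
        ∑ h ∈ (f / g).divisors, (if Nat.Coprime h N then (1 : ℤ) else 0) * (h : ℤ) ^ (2 * k - 3)) =
      (∑ g ∈ f.divisors, (if Nat.Coprime g (N * p) then (1 : ℤ) else 0) * moebius g * χ g *
          (g : ℤ) ^ (k - 2) *
          ∑ h ∈ (f / g).divisors,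
            (if Nat.Coprime h (N * p) then (1 : ℤ) else 0) * (h : ℤ) ^ (2 * k - 3)) *
        ((∑ j ∈ Finset.range (f.factorization p + 1), (p : ℤ) ^ (j * (2 * k - 3))) -
          χ p * (p : ℤ) ^ (k - 2) *
            ∑ j ∈ Finset.range (f.factorization p), (p : ℤ) ^ (j * (2 * k - 3))) := by
  obtain rfl | hf := eq_or_ne f 0
  · simp
  have hmult (M : ℕ) := isMultiplicative_twistedDivisorSum hχ1 (fun m n _ => hχm m n) M
    (k - 2) (2 * k - 3)
  set v := f.factorization p
  set m := ordCompl[p] f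
  have hsplit : f = p ^ v * m := (Nat.ordProj_mul_ordCompl_eq_self f p).symm
  have hmp : m.Coprime p := (Nat.coprime_ordCompl hp hf).symm
  have hcop : (p ^ v).Coprime m := hmp.symm.pow_left v
  rw [← twistedDivisorSum_apply, ← twistedDivisorSum_apply,
    ← twistedDivisorSum_apply_prime_pow hp hpN _ _ hχ1, hsplit,
    (hmult N).map_mul_of_coprime hcop, (hmult (N * p)).map_mul_of_coprime hcop,
    twistedDivisorSum_mul_self_apply_prime_pow hp _ _ hχ1,
    twistedDivisorSum_mul_apply_of_coprime _ _ _ hmp]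
  ring

open ArithmeticFunction in
/-- Lemma 3.2 (combinatorial content): H_N(M) = H_{Np}(M) · C_{p,D}(ord_p f) at the
level of twisted double divisor sums. -/
theorem stmt_13 (N p k f : ℕ) (hN : Squarefree N) (hN0 : 0 < N) (hp : p.Prime)
    (hpN : ¬ p ∣ N) (hk : 2 ≤ k) (hf : 0 < f) (χ : ℕ → ℤ) (hχ1 : χ 1 = 1)
    (hχm : ∀ m n, χ (m * n) = χ m * χ n) (hχv : ∀ n, χ n = -1 ∨ χ n = 0 ∨ χ n = 1) :
    (∑ g ∈ f.divisors, (if Nat.Coprime g N then (1 : ℤ) else 0) * moebius g * χ g *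
        (g : ℤ) ^ (k - 2) *
        ∑ h ∈ (f / g).divisors, (if Nat.Coprime h N then (1 : ℤ) else 0) * (h : ℤ) ^ (2 * k - 3)) =
      (∑ g ∈ f.divisors, (if Nat.Coprime g (N * p) then (1 : ℤ) else 0) * moebius g * χ g *
          (g : ℤ) ^ (k - 2) *
          ∑ h ∈ (f / g).divisors,
            (if Nat.Coprime h (N * p) then (1 : ℤ) else 0) * (h : ℤ) ^ (2 * k - 3)) *
        ((∑ j ∈ Finset.range (f.factorization p + 1), (p : ℤ) ^ (j * (2 * k - 3))) -
          χ p * (p : ℤ) ^ (k - 2) *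
            ∑ j ∈ Finset.range (f.factorization p), (p : ℤ) ^ (j * (2 * k - 3))) :=
  stmt_13_general N p k f hp hpN χ hχ1 hχm
end

section
/- Let p ≥ 2, k ≥ 3 be integers, ε ∈ {−1,0,1}, u ≥ 0, v ≥ u. Define ψ₀(p,u,v), ψ₁(p,u,v), ψ₂(p,u,v) by: ψ₂ = (p^{2k−3} − ε p^{k−2})·p^{v(2k−3)}·p^{k+1}/((p^{2k−2}−1)(p^{k}−1)); ψ₁ = (p^{2k−3} − ε p^{k−2})·[ p^{v(2k−3)}·p^{k−1}(p²−1)/((p^{2k−2}−1)(p^{k}−1)(p^{k−2}−1)) − p^{(v−u)(2k−3)} p^{u(k−1)}·p(p^{k−1}−1)/((p^{2k−3}−1)(p^{k}−1)(p^{k−2}−1)) ] + (ε p^{k−2} − 1)·p^{u(k−1)}·p^{k}/((p^{2k−3}−1)(p^{k}−1)); and ψ₀ as in the theorem. Then ψ₀(p,u,v) + ψ₁(p,u,v) + ψ₂(p,u,v) = ∑_{j=0}^{u} p^{j(k−1)} C(v−j), where C(w) = ∑_{j=0}^{w} p^{j(2k−3)} − ε p^{k−2} ∑_{j=0}^{w−1}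 p^{j(2k−3)}, with ψ₀ defined as: ψ₀ = (p^{2k−3} − ε p^{k−2})·[ p^{v(2k−3)}·p^{k−2}(p−1)/((p^{2k−3}−1)(p^{2k−2}−1)(p^{k−2}−1)) − p^{(v−u)(2k−3)} p^{u(k−1)}·(p−1)/((p^{2k−3}−1)(p^{k}−1)(p^{k−2}−1)) ] + (ε p^{k−2} − 1)·[ p^{u(k−1)}·p^{k−1}(p−1)/((p^{2k−3}−1)(p^{k}−1)(p^{k−1}−1)) − 1/((p^{2k−3}−1)(p^{k−1}−1)) ]. -/
/-!
Write `b = p^(k-2)`, so that `p^(k-1) = pb`, `p^(2k-3) = pb²` and every denominator is `p^n - 1`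
for some `n > 0`. Summing the geometric series in `C` gives
`C(w) = (A^(w+1) - 1 - εb (A^w - 1)) / (A - 1)` with `A = pb²`, and the weighted sum
`∑_{j ≤ u} (pb)^j C(v - j)` sums to a closed form in `A^v`, `A^(v-u) (pb)^u` and `(pb)^u`.
On the other side, `ψ₀ + ψ₁ + ψ₂` is linear in these three quantities, and each of their
coefficients collapses by a partial fraction identity to the corresponding coefficient of the
closed form.
-/

/-- The local factor C_{p,D}(v) = ∑_{j=0}^{v} p^{j(2k−3)} − ε p^{k−2} ∑_{j=0}^{v−1} p^{j(2k−3)}. -/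
noncomputable def Cfac (p k : ℕ) (ε : ℚ) (v : ℕ) : ℚ :=
  (∑ j ∈ Finset.range (v + 1), (p : ℚ) ^ (j * (2 * k - 3))) -
    ε * (p : ℚ) ^ (k - 2) * ∑ j ∈ Finset.range v, (p : ℚ) ^ (j * (2 * k - 3))

open Finset

section Field

variable {K : Type*} [Field K]

theorem geom_sum_sub_mul_geom_sum (a c : K) (ha : a ≠ 1) (n : ℕ) :
    ∑ j ∈ range (n + 1), a ^ j - c * ∑ j ∈ range n, a ^ j =
      (a ^ (n + 1) - 1 - c * (a ^ n - 1)) / (a - 1) := by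
  rw [geom_sum_eq ha, geom_sum_eq ha, mul_div_assoc', div_sub_div_same]

theorem sum_pow_mul_geom_sum_sub (P B c : K) (hPB : P * B ≠ 1) (hB : B ≠ 1) (hP : P ≠ 1)
    (u w : ℕ) :
    ∑ j ∈ range (u + 1), P ^ j *
        (((P * B) ^ (u + w - j + 1) - 1 - c * B * ((P * B) ^ (u + w - j) - 1)) / (P * B - 1)) =
      (P * B - c * B) * ((P * B) ^ (u + w) * B - (P * B) ^ w * P ^ u) /
          ((P * B - 1) * (B - 1)) -
        (1 - c * B) * (P * P ^ u - 1) / ((P * B - 1) * (P - 1)) := by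
  have hPB' : P * B - 1 ≠ 0 := sub_ne_zero.mpr hPB
  have hB' : B - 1 ≠ 0 := sub_ne_zero.mpr hB
  have hP' : P - 1 ≠ 0 := sub_ne_zero.mpr hP
  induction u generalizing w with
  | zero =>
    simp only [zero_add, sum_range_one, pow_zero, one_mul, Nat.sub_zero]
    field_simp
    ring
  | succ u ih =>
    rw [sum_range_succ, show u + 1 + w = u + (w + 1) by omega, ih (w + 1),
      show u + (w + 1) - (u + 1) = w by omega]
    field_simp
    ring

/-- The variables stand for `q = p`, `b = p^(k-2)`, `X = p^(v(2k-3))`, `Y = p^((v-u)(2k-3))`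
and `Z = p^(u(k-1))`. -/
theorem psi_sum_eq (q b e X Y Z : K) (hA : q * b * b - 1 ≠ 0) (hP2 : q * b * (q * b) - 1 ≠ 0)
    (hB : b - 1 ≠ 0) (hP : q * b - 1 ≠ 0) (hqP : q * (q * b) - 1 ≠ 0) :
    (q * b * b - e * b) * (X * b * (q - 1) / ((q * b * b - 1) * (q * b * (q * b) - 1) * (b - 1))
        - Y * Z * (q - 1) / ((q * b * b - 1) * (q * (q * b) - 1) * (b - 1)))
      + (e * b - 1) * (Z * (q * b) * (q - 1) / ((q * b * b - 1) * (q * (q * b) - 1) * (q * b - 1))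
        - 1 / ((q * b * b - 1) * (q * b - 1)))
      + ((q * b * b - e * b) *
            (X * (q * b) * (q ^ 2 - 1) / ((q * b * (q * b) - 1) * (q * (q * b) - 1) * (b - 1))
          - Y * Z * (q * (q * b - 1)) / ((q * b * b - 1) * (q * (q * b) - 1) * (b - 1)))
        + (e * b - 1) * Z * (q * (q * b)) / ((q * b * b - 1) * (q * (q * b) - 1)))
      + (q * b * b - e * b) * X * (q * (q * (q * b))) / ((q * b * (q * b) - 1) * (q * (q * b) - 1))
    = (q * b * b - e * b) * (X * b - Y * Z) / ((q * b * b - 1) * (b - 1))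
      - (1 - e * b) * (q * b * Z - 1) / ((q * b * b - 1) * (q * b - 1)) := by
  have coeff_X : b * (q - 1) / ((q * b * b - 1) * (q * b * (q * b) - 1) * (b - 1))
      + q * b * (q ^ 2 - 1) / ((q * b * (q * b) - 1) * (q * (q * b) - 1) * (b - 1))
      + q * (q * (q * b)) / ((q * b * (q * b) - 1) * (q * (q * b) - 1))
      = b / ((q * b * b - 1) * (b - 1)) := by
    rw [div_add_div _ _ (by simp [*]) (by simp [*]), div_add_div _ _ (by simp [*]) (by simp [*]),
      div_eq_div_iff (by simp [*]) (by simp [*])]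
    ring
  have coeff_YZ : (q - 1) / ((q * b * b - 1) * (q * (q * b) - 1) * (b - 1))
      + q * (q * b - 1) / ((q * b * b - 1) * (q * (q * b) - 1) * (b - 1))
      = 1 / ((q * b * b - 1) * (b - 1)) := by
    rw [div_add_div _ _ (by simp [*]) (by simp [*]), div_eq_div_iff (by simp [*]) (by simp [*])]
    ring
  have coeff_Z : q * b * (q - 1) / ((q * b * b - 1) * (q * (q * b) - 1) * (q * b - 1))
      + q * (q * b) / ((q * b * b - 1) * (q * (q * b) - 1))
      = q * b / ((q * b * b - 1) * (q * b - 1)) := by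
    rw [div_add_div _ _ (by simp [*]) (by simp [*]), div_eq_div_iff (by simp [*]) (by simp [*])]
    ring
  linear_combination ((q * b * b - e * b) * X) * coeff_X
    - ((q * b * b - e * b) * (Y * Z)) * coeff_YZ + ((e * b - 1) * Z) * coeff_Z

end Field

theorem Cfac_eq (p k : ℕ) (ε : ℚ) (hA : (p : ℚ) ^ (2 * k - 3) ≠ 1) (w : ℕ) :
    Cfac p k ε w =
      (((p : ℚ) ^ (2 * k - 3)) ^ (w + 1) - 1 - ε * (p : ℚ) ^ (k - 2) *
        (((p : ℚ) ^ (2 * k - 3)) ^ w - 1)) / ((p : ℚ) ^ (2 * k - 3) - 1) := by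
  simp only [Cfac, pow_mul']
  exact geom_sum_sub_mul_geom_sum _ _ hA w

theorem stmt_16_general (p k : ℕ) (hp : 2 ≤ p) (hk : 3 ≤ k) (ε : ℚ)
    (u v : ℕ) (huv : u ≤ v) :
    (((p : ℚ) ^ (2 * k - 3) - ε * (p : ℚ) ^ (k - 2)) *
        ((p : ℚ) ^ (v * (2 * k - 3)) * (p : ℚ) ^ (k - 2) * ((p : ℚ) - 1) /
            (((p : ℚ) ^ (2 * k - 3) - 1) * ((p : ℚ) ^ (2 * k - 2) - 1) *
              ((p : ℚ) ^ (k - 2) - 1)) -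
          (p : ℚ) ^ ((v - u) * (2 * k - 3)) * (p : ℚ) ^ (u * (k - 1)) * ((p : ℚ) - 1) /
            (((p : ℚ) ^ (2 * k - 3) - 1) * ((p : ℚ) ^ k - 1) * ((p : ℚ) ^ (k - 2) - 1))) +
      (ε * (p : ℚ) ^ (k - 2) - 1) *
        ((p : ℚ) ^ (u * (k - 1)) * (p : ℚ) ^ (k - 1) * ((p : ℚ) - 1) /
            (((p : ℚ) ^ (2 * k - 3) - 1) * ((p : ℚ) ^ k - 1) * ((p : ℚ) ^ (k - 1) - 1)) -
          1 / (((p : ℚ) ^ (2 * k - 3) - 1) * ((p : ℚ) ^ (k - 1) - 1)))) +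
      (((p : ℚ) ^ (2 * k - 3) - ε * (p : ℚ) ^ (k - 2)) *
        ((p : ℚ) ^ (v * (2 * k - 3)) * (p : ℚ) ^ (k - 1) * ((p : ℚ) ^ 2 - 1) /
            (((p : ℚ) ^ (2 * k - 2) - 1) * ((p : ℚ) ^ k - 1) * ((p : ℚ) ^ (k - 2) - 1)) -
          (p : ℚ) ^ ((v - u) * (2 * k - 3)) * (p : ℚ) ^ (u * (k - 1)) *
            ((p : ℚ) * ((p : ℚ) ^ (k - 1) - 1)) /
            (((p : ℚ) ^ (2 * k - 3) - 1) * ((p : ℚ) ^ k - 1) * ((p : ℚ) ^ (k - 2) - 1))) +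
      (ε * (p : ℚ) ^ (k - 2) - 1) * (p : ℚ) ^ (u * (k - 1)) * (p : ℚ) ^ k /
        (((p : ℚ) ^ (2 * k - 3) - 1) * ((p : ℚ) ^ k - 1))) +
      ((p : ℚ) ^ (2 * k - 3) - ε * (p : ℚ) ^ (k - 2)) * (p : ℚ) ^ (v * (2 * k - 3)) *
        (p : ℚ) ^ (k + 1) / (((p : ℚ) ^ (2 * k - 2) - 1) * ((p : ℚ) ^ k - 1)) =
    ∑ j ∈ Finset.range (u + 1), (p : ℚ) ^ (j * (k - 1)) * Cfac p k ε (v - j) := by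
  obtain ⟨w, rfl⟩ : ∃ w, v = u + w := ⟨v - u, by omega⟩
  have hp1 : (1 : ℚ) < p := by exact_mod_cast hp
  have hne : ∀ n : ℕ, n ≠ 0 → (p : ℚ) ^ n ≠ 1 := fun n hn => (one_lt_pow₀ hp1 hn).ne'
  have hsub : ∀ n : ℕ, n ≠ 0 → (p : ℚ) ^ n - 1 ≠ 0 :=
    fun n hn => sub_ne_zero.mpr (hne n hn)
  set b : ℚ := (p : ℚ) ^ (k - 2) with hb
  have hP : (p : ℚ) ^ (k - 1) = p * b := by rw [hb, ← pow_succ']; congr 1; omega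
  have hq : (p : ℚ) ^ k = p * (p * b) := by rw [← hP, ← pow_succ']; congr 1; omega
  have hq' : (p : ℚ) ^ (k + 1) = p * (p * (p * b)) := by rw [← hq, ← pow_succ']
  have hA : (p : ℚ) ^ (2 * k - 3) = p * b * b := by rw [← hP, hb, ← pow_add]; congr 1; omega
  have hP2 : (p : ℚ) ^ (2 * k - 2) = p * b * (p * b) := by
    rw [← hP, ← pow_add]; congr 1; omega
  rw [Finset.sum_congr rfl fun j _ => by rw [Cfac_eq p k ε (hne _ (by omega)), pow_mul']]
  simp only [pow_mul', Nat.add_sub_cancel_left, hP, hq, hq', hA, hP2]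
  rw [sum_pow_mul_geom_sum_sub _ _ _ (hA ▸ hne _ (by omega)) (hne _ (by omega))
    (hP ▸ hne _ (by omega))]
  exact psi_sum_eq _ _ _ _ _ _ (hA ▸ hsub _ (by omega)) (hP2 ▸ hsub _ (by omega))
    (hsub _ (by omega)) (hP ▸ hsub _ (by omega)) (hq ▸ hsub _ (by omega))

/-- ψ₀ + ψ₁ + ψ₂ = ∑_{j=0}^{u} p^{j(k−1)} C(v−j), where ψ₀, ψ₁, ψ₂ are the local
factors of Theorem 3.3. -/
theorem stmt_16 (p k : ℕ) (hp : 2 ≤ p) (hk : 3 ≤ k) (ε : ℚ)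
    (hε : ε = -1 ∨ ε = 0 ∨ ε = 1) (u v : ℕ) (huv : u ≤ v) :
    (((p : ℚ) ^ (2 * k - 3) - ε * (p : ℚ) ^ (k - 2)) *
        ((p : ℚ) ^ (v * (2 * k - 3)) * (p : ℚ) ^ (k - 2) * ((p : ℚ) - 1) /
            (((p : ℚ) ^ (2 * k - 3) - 1) * ((p : ℚ) ^ (2 * k - 2) - 1) *
              ((p : ℚ) ^ (k - 2) - 1)) -
          (p : ℚ) ^ ((v - u) * (2 * k - 3)) * (p : ℚ) ^ (u * (k - 1)) * ((p : ℚ) - 1) /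
            (((p : ℚ) ^ (2 * k - 3) - 1) * ((p : ℚ) ^ k - 1) * ((p : ℚ) ^ (k - 2) - 1))) +
      (ε * (p : ℚ) ^ (k - 2) - 1) *
        ((p : ℚ) ^ (u * (k - 1)) * (p : ℚ) ^ (k - 1) * ((p : ℚ) - 1) /
            (((p : ℚ) ^ (2 * k - 3) - 1) * ((p : ℚ) ^ k - 1) * ((p : ℚ) ^ (k - 1) - 1)) -
          1 / (((p : ℚ) ^ (2 * k - 3) - 1) * ((p : ℚ) ^ (k - 1) - 1)))) +
      (((p : ℚ) ^ (2 * k - 3) - ε * (p : ℚ) ^ (k - 2)) *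
        ((p : ℚ) ^ (v * (2 * k - 3)) * (p : ℚ) ^ (k - 1) * ((p : ℚ) ^ 2 - 1) /
            (((p : ℚ) ^ (2 * k - 2) - 1) * ((p : ℚ) ^ k - 1) * ((p : ℚ) ^ (k - 2) - 1)) -
          (p : ℚ) ^ ((v - u) * (2 * k - 3)) * (p : ℚ) ^ (u * (k - 1)) *
            ((p : ℚ) * ((p : ℚ) ^ (k - 1) - 1)) /
            (((p : ℚ) ^ (2 * k - 3) - 1) * ((p : ℚ) ^ k - 1) * ((p : ℚ) ^ (k - 2) - 1))) +
      (ε * (p : ℚ) ^ (k - 2) - 1) * (p : ℚ) ^ (u * (k - 1)) * (p : ℚ) ^ k /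
        (((p : ℚ) ^ (2 * k - 3) - 1) * ((p : ℚ) ^ k - 1))) +
      ((p : ℚ) ^ (2 * k - 3) - ε * (p : ℚ) ^ (k - 2)) * (p : ℚ) ^ (v * (2 * k - 3)) *
        (p : ℚ) ^ (k + 1) / (((p : ℚ) ^ (2 * k - 2) - 1) * ((p : ℚ) ^ k - 1)) =
    ∑ j ∈ Finset.range (u + 1), (p : ℚ) ^ (j * (k - 1)) * Cfac p k ε (v - j) :=
  stmt_16_general p k hp hk ε u v huv
end
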